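/- Assuming []_Y : 0 → Y is a monomorphism with respect to propagators for each type Y, the translation of the programmers' language for exceptions into the core language — throw_Y := []_Y ∘ tag and try(a)catch(b) := TRY(a, CATCH(b)), where CATCH(b) : Y → Y is a catcher with CATCH(b) ∼ id_Y and CATCH(b) ∘ []_Y ≡ b ∘ untag, and TRY(a,k) : X → Y is a propagator with TRY(a,k) ∼ k ∘ a — validates all rules of L_exc: in particular (propagate) a ∘ throw_X ≡ throw_Y, (recover), (try), (try₀) try(u)catch(b) ≡ u for pure u, and (try₁) try(throw_Y ∘ u)catch(b) ≡ b ∘ u for pure u : X → P. -/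
import Mathlib


/-! The decorated logic for the core language for exceptions `L_excore`.
Types are elements of `Ty`, with a distinguished type `Par` of parameters and an
empty type `Emp` (written `0` in the paper); `Sig` is a signature of pure operations.
`tag : Par → Emp` is a propagator and `untag : Emp → Par` is a catcher. -/

inductive CoTm (Ty : Type) (Par Emp : Ty) (Sig : Ty → Ty → Type) : Ty → Ty → Type where
  | id (X : Ty) : CoTm Ty Par Emp Sig X X
  | comp {X Y Z : Ty} (g : CoTm Ty Par Emp Sig Y Z) (f : CoTm Ty Par Emp Sig X Y) :
      CoTm Ty Par Emp Sig X Z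
  | gen {X Y : Ty} (s : Sig X Y) : CoTm Ty Par Emp Sig X Y
  | fromEmpty (Y : Ty) : CoTm Ty Par Emp Sig Emp Y
  | tag : CoTm Ty Par Emp Sig Par Emp
  | untag : CoTm Ty Par Emp Sig Emp Par

variable {Ty : Type} {Par Emp : Ty} {Sig : Ty → Ty → Type}

/-- The pure terms of `L_excore`. -/
inductive CoPure : ∀ {X Y : Ty}, CoTm Ty Par Emp Sig X Y → Prop where
  | id (X : Ty) : CoPure (CoTm.id X)
  | comp {X Y Z : Ty} {g : CoTm Ty Par Emp Sig Y Z} {f : CoTm Ty Par Emp Sig X Y} :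
      CoPure g → CoPure f → CoPure (CoTm.comp g f)
  | gen {X Y : Ty} (s : Sig X Y) : CoPure (CoTm.gen (Par := Par) (Emp := Emp) s)
  | fromEmpty (Y : Ty) : CoPure (CoTm.fromEmpty (Par := Par) (Sig := Sig) Y)

/-- The propagators of `L_excore`: terms not containing `untag`
(all terms are catchers). -/
inductive CoPpg : ∀ {X Y : Ty}, CoTm Ty Par Emp Sig X Y → Prop where
  | id (X : Ty) : CoPpg (CoTm.id X)
  | comp {X Y Z : Ty} {g : CoTm Ty Par Emp Sig Y Z} {f : CoTm Ty Par Emp Sig X Y} :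
      CoPpg g → CoPpg f → CoPpg (CoTm.comp g f)
  | gen {X Y : Ty} (s : Sig X Y) : CoPpg (CoTm.gen (Par := Par) (Emp := Emp) s)
  | fromEmpty (Y : Ty) : CoPpg (CoTm.fromEmpty (Par := Par) (Sig := Sig) Y)
  | tag : CoPpg (CoTm.tag (Sig := Sig))

/-- A decorated equation of `L_excore`: a pair of parallel terms together with a
`Bool` which is `true` for a strong equation `≡` and `false` for a weak equation `∼`. -/
def CoEqn (Ty : Type) (Par Emp : Ty) (Sig : Ty → Ty → Type) : Type :=
  Σ X : Ty, Σ Y : Ty, (CoTm Ty Par Emp Sig X Y × CoTm Ty Par Emp Sig X Y) × Bool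

mutual
/-- Derivable strong equations of `L_excore` from the axiom set `Ax`. -/
inductive CoSEq (Ax : Set (CoEqn Ty Par Emp Sig)) :
    ∀ {X Y : Ty}, CoTm Ty Par Emp Sig X Y → CoTm Ty Par Emp Sig X Y → Prop where
  | ax {X Y : Ty} {f g : CoTm Ty Par Emp Sig X Y} :
      (⟨X, Y, (f, g), true⟩ : CoEqn Ty Par Emp Sig) ∈ Ax → CoSEq Ax f g
  | refl {X Y : Ty} (f : CoTm Ty Par Emp Sig X Y) : CoSEq Ax f f
  | symm {X Y : Ty} {f g : CoTm Ty Par Emp Sig X Y} : CoSEq Ax f g → CoSEq Ax g f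
  | trans {X Y : Ty} {f g h : CoTm Ty Par Emp Sig X Y} :
      CoSEq Ax f g → CoSEq Ax g h → CoSEq Ax f h
  | subs {X Y Z : Ty} (u : CoTm Ty Par Emp Sig X Y) {v₁ v₂ : CoTm Ty Par Emp Sig Y Z} :
      CoSEq Ax v₁ v₂ → CoSEq Ax (v₁.comp u) (v₂.comp u)
  | repl {X Y Z : Ty} {v₁ v₂ : CoTm Ty Par Emp Sig X Y} (w : CoTm Ty Par Emp Sig Y Z) :
      CoSEq Ax v₁ v₂ → CoSEq Ax (w.comp v₁) (w.comp v₂)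
  | idLeft {X Y : Ty} (f : CoTm Ty Par Emp Sig X Y) : CoSEq Ax ((CoTm.id Y).comp f) f
  | idRight {X Y : Ty} (f : CoTm Ty Par Emp Sig X Y) : CoSEq Ax (f.comp (CoTm.id X)) f
  | assoc {W X Y Z : Ty} (h : CoTm Ty Par Emp Sig Y Z) (g : CoTm Ty Par Emp Sig X Y)
      (f : CoTm Ty Par Emp Sig W X) : CoSEq Ax ((h.comp g).comp f) (h.comp (g.comp f))
  -- (initial) of the pure sublogic `L_eqn`:
  | initialPure {Y : Ty} {u : CoTm Ty Par Emp Sig Emp Y} :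
      CoPure u → CoSEq Ax u (CoTm.fromEmpty Y)
  -- (eq₁): a weak equation between propagators is strong
  | eq₁ {X Y : Ty} {f g : CoTm Ty Par Emp Sig X Y} :
      CoPpg f → CoPpg g → CoWEq Ax f g → CoSEq Ax f g
  -- (eq₂)
  | eq₂ {X Y : Ty} {f g : CoTm Ty Par Emp Sig X Y} :
      CoWEq Ax f g → CoSEq Ax (f.comp (CoTm.fromEmpty X)) (g.comp (CoTm.fromEmpty X)) →
      CoSEq Ax f g
  -- (eq₃)
  | eq₃ {X : Ty} {f g : CoTm Ty Par Emp Sig Emp X} :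
      CoWEq Ax (f.comp CoTm.tag) (g.comp CoTm.tag) → CoSEq Ax f g

/-- Derivable weak equations of `L_excore` from the axiom set `Ax`. -/
inductive CoWEq (Ax : Set (CoEqn Ty Par Emp Sig)) :
    ∀ {X Y : Ty}, CoTm Ty Par Emp Sig X Y → CoTm Ty Par Emp Sig X Y → Prop where
  | ax {X Y : Ty} {f g : CoTm Ty Par Emp Sig X Y} :
      (⟨X, Y, (f, g), false⟩ : CoEqn Ty Par Emp Sig) ∈ Ax → CoWEq Ax f g
  | symm {X Y : Ty} {f g : CoTm Ty Par Emp Sig X Y} : CoWEq Ax f g → CoWEq Ax g f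
  | trans {X Y : Ty} {f g h : CoTm Ty Par Emp Sig X Y} :
      CoWEq Ax f g → CoWEq Ax g h → CoWEq Ax f h
  -- (subs_∼): substitution only by pure terms
  | subsPure {X Y Z : Ty} {u : CoTm Ty Par Emp Sig X Y} {v₁ v₂ : CoTm Ty Par Emp Sig Y Z} :
      CoPure u → CoWEq Ax v₁ v₂ → CoWEq Ax (v₁.comp u) (v₂.comp u)
  -- (repl_∼): replacement by arbitrary terms
  | repl {X Y Z : Ty} {v₁ v₂ : CoTm Ty Par Emp Sig X Y} (w : CoTm Ty Par Emp Sig Y Z) :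
      CoWEq Ax v₁ v₂ → CoWEq Ax (w.comp v₁) (w.comp v₂)
  -- (empty_∼)
  | empty {Y : Ty} (f : CoTm Ty Par Emp Sig Emp Y) : CoWEq Ax f (CoTm.fromEmpty Y)
  -- (≡-to-∼)
  | ofStrong {X Y : Ty} {f g : CoTm Ty Par Emp Sig X Y} : CoSEq Ax f g → CoWEq Ax f g
  -- (ax): untag ∘ tag ∼ id_P
  | untag_tag : CoWEq Ax ((CoTm.untag (Sig := Sig)).comp CoTm.tag) (CoTm.id Par)
end

/-- Two sets of decorated equations are `T_excore`-equivalent over `Ax` when they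
generate the same theory (same strong and weak theorems) over `Ax`. -/
def CoEquiv (Ax E₁ E₂ : Set (CoEqn Ty Par Emp Sig)) : Prop :=
  ∀ (X Y : Ty) (f g : CoTm Ty Par Emp Sig X Y),
    (CoSEq (Ax ∪ E₁) f g ↔ CoSEq (Ax ∪ E₂) f g) ∧
    (CoWEq (Ax ∪ E₁) f g ↔ CoWEq (Ax ∪ E₂) f g)

/-- `Ax` is a pure (strong) theory: all axioms are strong equations between pure terms. -/
def CoPureAx (Ax : Set (CoEqn Ty Par Emp Sig)) : Prop :=
  ∀ e ∈ Ax, CoPure e.2.2.1.1 ∧ CoPure e.2.2.1.2 ∧ e.2.2.2 = true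

theorem coPure_to_coPpg {X Y : Ty} {f : CoTm Ty Par Emp Sig X Y} (h : CoPure f) : CoPpg f := by
  induction h with
  | id X => exact CoPpg.id X
  | comp _ _ ihg ihf => exact CoPpg.comp ihg ihf
  | gen s => exact CoPpg.gen s
  | fromEmpty Y => exact CoPpg.fromEmpty Y

/-- Assuming each `[]_Y` is a monomorphism with respect to propagators,
the translation `throw_Y := []_Y ∘ tag`, `try(a)catch(b) := TRY(a, CATCH(b))` of the
programmers' language into the core language validates all rules of `L_exc`:
(propagate), (recover), (try), (try₀) and (try₁). -/
theorem coexc_translation_correct (Ax : Set (CoEqn Ty Par Emp Sig)) (hAx : CoPureAx Ax)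
    -- each `[]_Y` is a monomorphism with respect to propagators:
    (hmono : ∀ {Y Z : Ty} (g₁ g₂ : CoTm Ty Par Emp Sig Z Emp), CoPpg g₁ → CoPpg g₂ →
      CoSEq Ax ((CoTm.fromEmpty Y).comp g₁) ((CoTm.fromEmpty Y).comp g₂) → CoSEq Ax g₁ g₂)
    -- the catcher `CATCH(b) : Y → Y` with `CATCH(b) ∼ id_Y` and `CATCH(b) ∘ []_Y ≡ b ∘ untag`:
    (CATCH : ∀ {Y : Ty}, CoTm Ty Par Emp Sig Par Y → CoTm Ty Par Emp Sig Y Y)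
    (hCatchW : ∀ {Y : Ty} (b : CoTm Ty Par Emp Sig Par Y), CoPpg b →
      CoWEq Ax (CATCH b) (CoTm.id Y))
    (hCatchS : ∀ {Y : Ty} (b : CoTm Ty Par Emp Sig Par Y), CoPpg b →
      CoSEq Ax ((CATCH b).comp (CoTm.fromEmpty Y)) (b.comp CoTm.untag))
    -- the propagator `TRY(a,k) : X → Y` with `TRY(a,k) ∼ k ∘ a`:
    (TRY : ∀ {X Y : Ty}, CoTm Ty Par Emp Sig X Y → CoTm Ty Par Emp Sig Y Y →
      CoTm Ty Par Emp Sig X Y)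
    (hTryPpg : ∀ {X Y : Ty} (a : CoTm Ty Par Emp Sig X Y) (k : CoTm Ty Par Emp Sig Y Y),
      CoPpg a → CoPpg (TRY a k))
    (hTryW : ∀ {X Y : Ty} (a : CoTm Ty Par Emp Sig X Y) (k : CoTm Ty Par Emp Sig Y Y),
      CoPpg a → CoWEq Ax (TRY a k) (k.comp a)) :
    -- (propagate): a ∘ throw_X ≡ throw_Y
    (∀ {X Y : Ty} (a : CoTm Ty Par Emp Sig X Y), CoPpg a →
      CoSEq Ax (a.comp ((CoTm.fromEmpty X).comp CoTm.tag)) ((CoTm.fromEmpty Y).comp CoTm.tag)) ∧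
    -- (recover)
    (∀ {X : Ty} (Y : Ty) (u₁ u₂ : CoTm Ty Par Emp Sig X Par), CoPure u₁ → CoPure u₂ →
      CoSEq Ax ((CoTm.fromEmpty Y).comp (CoTm.tag.comp u₁))
               ((CoTm.fromEmpty Y).comp (CoTm.tag.comp u₂)) →
      CoSEq Ax u₁ u₂) ∧
    -- (try)
    (∀ {X Y : Ty} (a₁ a₂ : CoTm Ty Par Emp Sig X Y) (b : CoTm Ty Par Emp Sig Par Y),
      CoPpg a₁ → CoPpg a₂ → CoPpg b → CoSEq Ax a₁ a₂ →
      CoSEq Ax (TRY a₁ (CATCH b)) (TRY a₂ (CATCH b))) ∧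
    -- (try₀)
    (∀ {X Y : Ty} (u : CoTm Ty Par Emp Sig X Y) (b : CoTm Ty Par Emp Sig Par Y),
      CoPure u → CoPpg b → CoSEq Ax (TRY u (CATCH b)) u) ∧
    -- (try₁)
    (∀ {X Y : Ty} (u : CoTm Ty Par Emp Sig X Par) (b : CoTm Ty Par Emp Sig Par Y),
      CoPure u → CoPpg b →
      CoSEq Ax (TRY ((CoTm.fromEmpty Y).comp (CoTm.tag.comp u)) (CATCH b)) (b.comp u)) := by
  refine ⟨?_, ?_, ?_, ?_, ?_⟩
  · -- (propagate)
    intro X Y a ha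
    have h1 : CoSEq Ax (a.comp (CoTm.fromEmpty X)) (CoTm.fromEmpty Y) :=
      CoSEq.eq₁ (CoPpg.comp ha (CoPpg.fromEmpty X)) (CoPpg.fromEmpty Y) (CoWEq.empty _)
    exact CoSEq.trans (CoSEq.symm (CoSEq.assoc a (CoTm.fromEmpty X) CoTm.tag))
      (CoSEq.subs CoTm.tag h1)
  · -- (recover)
    intro X Y u₁ u₂ h1 h2 hS
    have g1 : CoSEq Ax (CoTm.tag.comp u₁) (CoTm.tag.comp u₂) :=
      hmono _ _ (CoPpg.comp CoPpg.tag (coPure_to_coPpg h1))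
        (CoPpg.comp CoPpg.tag (coPure_to_coPpg h2)) hS
    have chain : ∀ (u : CoTm Ty Par Emp Sig X Par), CoPure u →
        CoWEq Ax u (CoTm.untag.comp (CoTm.tag.comp u)) := by
      intro u hu
      refine CoWEq.trans (CoWEq.symm (CoWEq.ofStrong (CoSEq.idLeft u)))
        (CoWEq.trans (CoWEq.symm (CoWEq.subsPure hu CoWEq.untag_tag))
          (CoWEq.ofStrong (CoSEq.assoc CoTm.untag CoTm.tag u)))
    have w : CoWEq Ax u₁ u₂ :=
      CoWEq.trans (chain u₁ h1)
        (CoWEq.trans (CoWEq.ofStrong (CoSEq.repl CoTm.untag g1))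
          (CoWEq.symm (chain u₂ h2)))
    exact CoSEq.eq₁ (coPure_to_coPpg h1) (coPure_to_coPpg h2) w
  · -- (try)
    intro X Y a₁ a₂ b h₁ h₂ hb hS
    refine CoSEq.eq₁ (hTryPpg _ _ h₁) (hTryPpg _ _ h₂) ?_
    exact CoWEq.trans (hTryW a₁ _ h₁)
      (CoWEq.trans (CoWEq.ofStrong (CoSEq.repl (CATCH b) hS)) (CoWEq.symm (hTryW a₂ _ h₂)))
  · -- (try₀)
    intro X Y u b hu hb
    refine CoSEq.eq₁ (hTryPpg _ _ (coPure_to_coPpg hu)) (coPure_to_coPpg hu) ?_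
    exact CoWEq.trans (hTryW u _ (coPure_to_coPpg hu))
      (CoWEq.trans (CoWEq.subsPure hu (hCatchW b hb)) (CoWEq.ofStrong (CoSEq.idLeft u)))
  · -- (try₁)
    intro X Y u b hu hb
    have hup := coPure_to_coPpg hu
    have happg : CoPpg ((CoTm.fromEmpty Y).comp (CoTm.tag.comp u)) :=
      CoPpg.comp (CoPpg.fromEmpty Y) (CoPpg.comp CoPpg.tag hup)
    refine CoSEq.eq₁ (hTryPpg _ _ happg) (CoPpg.comp hb hup) ?_
    have s1 : CoSEq Ax ((CATCH b).comp ((CoTm.fromEmpty Y).comp (CoTm.tag.comp u)))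
        (((CATCH b).comp (CoTm.fromEmpty Y)).comp (CoTm.tag.comp u)) :=
      CoSEq.symm (CoSEq.assoc (CATCH b) (CoTm.fromEmpty Y) (CoTm.tag.comp u))
    have s2 := CoSEq.subs (CoTm.tag.comp u) (hCatchS b hb)
    have s3 := CoSEq.assoc (Ax := Ax) b CoTm.untag (CoTm.tag.comp u)
    have w4 : CoWEq Ax (CoTm.untag.comp (CoTm.tag.comp u)) u :=
      CoWEq.trans (CoWEq.symm (CoWEq.ofStrong (CoSEq.assoc CoTm.untag CoTm.tag u)))
        (CoWEq.trans (CoWEq.subsPure hu CoWEq.untag_tag) (CoWEq.ofStrong (CoSEq.idLeft u)))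
    exact CoWEq.trans (hTryW _ _ happg)
      (CoWEq.trans (CoWEq.ofStrong (CoSEq.trans s1 (CoSEq.trans s2 s3)))
        (CoWEq.repl b w4))
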